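/- arXiv:1711.10484 — 3 statements merged into one kernel-verified Lean document; each statement's English description precedes it below -/
import Mathlib

section
/- Let θ be a continuous binary substitution of constant length r with one-sided fixed point ω and I = {m : θ(0)_m = 1}. Let j = min I and p = jr + j. Then for every nonempty finite set F ⊆ ℕ, writing ρ = Σ_{m∈F} p·r^{2m}, we have ω_ρ = 0 and ω_{ρ−1} = 1. -/
open Set Topology

/-! ### Ellis semigroup of a dynamical system -/

section Ellis

variable {X : Type*} [TopologicalSpace X]

/-- The Ellis (enveloping) semigroup of a dynamical system `(X, T)`: the closure of
`{T^n : n ∈ ℤ}` in `X → X` with the topology of pointwise convergence. -/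
def ellisSemigroup (T : X ≃ₜ X) : Set (X → X) :=
  closure {f : X → X | ∃ n : ℤ, f = ⇑(T.toEquiv ^ n)}

/-- A (left) ideal of the Ellis semigroup. -/
def IsLeftIdealOf (T : X ≃ₜ X) (I : Set (X → X)) : Prop :=
  I.Nonempty ∧ I ⊆ ellisSemigroup T ∧ ∀ p ∈ ellisSemigroup T, ∀ q ∈ I, p ∘ q ∈ I

/-- A minimal left ideal of the Ellis semigroup. -/
def IsMinimalLeftIdealOf (T : X ≃ₜ X) (I : Set (X → X)) : Prop :=
  IsLeftIdealOf T I ∧ ∀ J, IsLeftIdealOf T J → J ⊆ I → J = I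

/-- Two points are proximal iff some element of the Ellis semigroup identifies them. -/
def ProximalIn (T : X ≃ₜ X) (x y : X) : Prop :=
  ∃ p ∈ ellisSemigroup T, p x = p y

end Ellis

/-! ### The shift on bi-infinite sequences and orbit closures -/

section Shift

variable {A : Type*}

/-- The shift map on bi-infinite sequences. -/
def shiftF (A : Type*) : (ℤ → A) → (ℤ → A) := fun x n => x (n + 1)

/-- The inverse shift map on bi-infinite sequences. -/
def shiftFInv (A : Type*) : (ℤ → A) → (ℤ → A) := fun x n => x (n - 1)

variable [TopologicalSpace A]

/-- The shift-orbit closure of a bi-infinite sequence. -/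
def orbitClosure (x : ℤ → A) : Set (ℤ → A) :=
  closure {y | ∃ n : ℤ, y = fun k => x (k + n)}

lemma self_mem_orbitClosure (x : ℤ → A) : x ∈ orbitClosure x :=
  subset_closure ⟨0, by funext k; simp⟩

lemma shiftF_mem_orbitClosure (x : ℤ → A) {y : ℤ → A} (hy : y ∈ orbitClosure x) :
    shiftF A y ∈ orbitClosure x := by
  have hc : Continuous (shiftF A) := continuous_pi fun n => continuous_apply (n + 1)
  have h1 := image_closure_subset_closure_image
    (s := {y : ℤ → A | ∃ n : ℤ, y = fun k => x (k + n)}) hc (mem_image_of_mem _ hy)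
  refine closure_mono ?_ h1
  rintro _ ⟨z, ⟨n, rfl⟩, rfl⟩
  refine ⟨n + 1, ?_⟩
  funext k
  show x (k + 1 + n) = x (k + (n + 1))
  congr 1; ring

lemma shiftFInv_mem_orbitClosure (x : ℤ → A) {y : ℤ → A} (hy : y ∈ orbitClosure x) :
    shiftFInv A y ∈ orbitClosure x := by
  have hc : Continuous (shiftFInv A) := continuous_pi fun n => continuous_apply (n - 1)
  have h1 := image_closure_subset_closure_image
    (s := {y : ℤ → A | ∃ n : ℤ, y = fun k => x (k + n)}) hc (mem_image_of_mem _ hy)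
  refine closure_mono ?_ h1
  rintro _ ⟨z, ⟨n, rfl⟩, rfl⟩
  refine ⟨n - 1, ?_⟩
  funext k
  show x (k - 1 + n) = x (k + (n - 1))
  congr 1; ring

/-- The shift, as a homeomorphism of the orbit closure of `x`. -/
def shiftHomOn (x : ℤ → A) : (orbitClosure x) ≃ₜ (orbitClosure x) where
  toFun y := ⟨shiftF A y.1, shiftF_mem_orbitClosure x y.2⟩
  invFun y := ⟨shiftFInv A y.1, shiftFInv_mem_orbitClosure x y.2⟩
  left_inv y := by
    apply Subtype.ext; funext k
    show y.1 (k - 1 + 1) = y.1 k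
    congr 1; ring
  right_inv y := by
    apply Subtype.ext; funext k
    show y.1 (k + 1 - 1) = y.1 k
    congr 1; ring
  continuous_toFun := Continuous.subtype_mk
    ((continuous_pi fun n => continuous_apply (n + 1)).comp continuous_subtype_val) _
  continuous_invFun := Continuous.subtype_mk
    ((continuous_pi fun n => continuous_apply (n - 1)).comp continuous_subtype_val) _

/-- The set of legal two-letter words of a subshift `Xs`. -/
def legalPairs (Xs : Set (ℤ → A)) : Set (A × A) :=
  {ab | ∃ y ∈ Xs, ∃ i : ℤ, y i = ab.1 ∧ y (i + 1) = ab.2}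

end Shift

/-! ### Substitutions of constant length -/

section Subst

variable {na r : ℕ} [NeZero na] [NeZero r]

/-- `wordIter θ k a j` is the `j`-th letter of the word `θ^k(a)` (of length `r^k`). -/
def wordIter (θ : Fin na → Fin r → Fin na) : ℕ → Fin na → ℕ → Fin na
  | 0, a, _ => a
  | k+1, a, j => wordIter θ k (θ a ⟨(j / r ^ k) % r, Nat.mod_lt _ (NeZero.pos r)⟩) (j % r ^ k)

/-- A bi-infinite fixed point of the substitution `θ`. -/
def IsSubFix (θ : Fin na → Fin r → Fin na) (x : ℤ → Fin na) : Prop :=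
  ∀ (n : ℤ) (m : Fin r), x (r * n + (m : ℕ)) = θ (x n) m

/-- `θ` is admissible: injective on letters and with non-periodic fixed points. -/
def AdmissibleSub (θ : Fin na → Fin r → Fin na) : Prop :=
  Function.Injective θ ∧
  ∀ x : ℤ → Fin na, IsSubFix θ x → ∀ p : ℤ, p ≠ 0 → ∃ k : ℤ, x (k + p) ≠ x k

/-- `θ` is primitive: some power of `θ` maps any letter to a word containing all letters. -/
def PrimitiveSub (θ : Fin na → Fin r → Fin na) : Prop :=
  ∃ k : ℕ, ∀ a b : Fin na, ∃ j < r ^ k, wordIter θ k a j = b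

/-- `θ` is coincidence-free. -/
def CoincidenceFreeSub (θ : Fin na → Fin r → Fin na) : Prop :=
  ∀ a b : Fin na, a ≠ b → ∀ m : Fin r, θ a m ≠ θ b m

/-- `θ` is in canonical form: `θ(a)` begins and ends with `a`. -/
def CanonicalFormSub (θ : Fin na → Fin r → Fin na) : Prop :=
  ∀ a, θ a ⟨0, NeZero.pos r⟩ = a ∧ θ a ⟨r - 1, Nat.sub_lt (NeZero.pos r) one_pos⟩ = a

/-- `HeightData θ xh d m` : `xh` is a bi-infinite fixed point of `θ` with `xh 0 = 0`,
`d` is the gcd of the set `M = {n ≥ 1 : xh n = 0}` of positive occurrences of `0`,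
and `m` is the height `m(θ)`: the largest divisor of `d` coprime to `r`. -/
def HeightData (θ : Fin na → Fin r → Fin na) (xh : ℤ → Fin na) (d m : ℕ) : Prop :=
  IsSubFix θ xh ∧ xh 0 = 0 ∧
  (∀ k : ℕ, 1 ≤ k → xh (k : ℤ) = 0 → d ∣ k) ∧
  (∀ e : ℕ, (∀ k : ℕ, 1 ≤ k → xh (k : ℤ) = 0 → e ∣ k) → e ∣ d) ∧
  0 < m ∧ m ∣ d ∧ Nat.Coprime m r ∧
  ∀ m' : ℕ, m' ∣ d → Nat.Coprime m' r → m' ∣ m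

/-- `z(i) = (min {n : θ(i)_n = 0}) mod m`. -/
noncomputable def subZ (θ : Fin na → Fin r → Fin na) (m : ℕ) (i : Fin na) : ℕ :=
  sInf {n : ℕ | ∃ h : n < r, θ i ⟨n, h⟩ = 0} % m

/-- The class `S_p = {i : z(i) ≡ -p (mod m)}`. -/
def subS (θ : Fin na → Fin r → Fin na) (m : ℕ) (p : ℕ) : Set (Fin na) :=
  {i | Int.ModEq (m : ℤ) (subZ θ m i : ℤ) (-(p : ℤ))}

/-- The set `P(i,j,k) = {θ^k(p)[j, j+1] : p ∈ S_i}`. -/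
def subP (θ : Fin na → Fin r → Fin na) (m : ℕ) (i j k : ℕ) : Set (Fin na × Fin na) :=
  {ab | ∃ p ∈ subS θ m i, ab = (wordIter θ k p j, wordIter θ k p (j + 1))}

/-- The collection of all classes `P(i,j,k)` for `i < m(θ)`, `k ≥ 1`, `0 ≤ j ≤ r^k - 2`. -/
def subClasses (θ : Fin na → Fin r → Fin na) (m : ℕ) : Set (Set (Fin na × Fin na)) :=
  {P | ∃ i < m, ∃ k, 1 ≤ k ∧ ∃ j, j + 2 ≤ r ^ k ∧ P = subP θ m i j k}

/-- Condition (A): the collection of the `P(i,j,k)` is a partition of the set of legal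
two-letter words. -/
def subCondA (θ : Fin na → Fin r → Fin na) (m : ℕ) (Xs : Set (ℤ → Fin na)) : Prop :=
  (∀ C ∈ subClasses θ m, C.Nonempty) ∧
  (⋃₀ subClasses θ m = legalPairs Xs) ∧
  ∀ C ∈ subClasses θ m, ∀ D ∈ subClasses θ m, C = D ∨ Disjoint C D

/-- Data of the quotient substitution `φ` on the alphabet `B = Fin n` of classes:
`c` is the labelling of legal two-letter words by their classes (with the class of words
whose last letter lies in `S_0` labelled `0`), and `φ(b)_0 = b`,
`φ(b)_h = [θ(a_b)[h-1,h]]` for `1 ≤ h ≤ r-1`, where `a_b` is any last letter of a word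
in class `b`. -/
def QuotientSubData {n : ℕ} [NeZero n] (θ : Fin na → Fin r → Fin na) (m : ℕ)
    (Xs : Set (ℤ → Fin na)) (c : Fin na × Fin na → Fin n)
    (φ : Fin n → Fin r → Fin n) : Prop :=
  (∀ b : Fin n, ∃ ab ∈ legalPairs Xs, c ab = b) ∧
  (∀ ab ∈ legalPairs Xs, ∀ cd ∈ legalPairs Xs,
    (c ab = c cd ↔ ∃ C ∈ subClasses θ m, ab ∈ C ∧ cd ∈ C)) ∧
  (∀ ab ∈ legalPairs Xs, c ab = ⟨0, NeZero.pos n⟩ → ab.2 ∈ subS θ m 0) ∧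
  (∀ b : Fin n, φ b ⟨0, NeZero.pos r⟩ = b) ∧
  ∀ b : Fin n, ∀ ab ∈ legalPairs Xs, c ab = b →
    ∀ (h : ℕ) (_ : 1 ≤ h) (hh : h < r),
      φ b ⟨h, hh⟩ = c (θ ab.2 ⟨h - 1, lt_of_le_of_lt (Nat.sub_le h 1) hh⟩, θ ab.2 ⟨h, hh⟩)

/-- The `i`-th column set `C_i = {φ(b)_i : b ∈ B}` of a substitution `φ`. -/
def colSet {n : ℕ} (φ : Fin n → Fin r → Fin n) (i : ℕ) (hi : i < r) : Set (Fin n) :=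
  {b' | ∃ b, φ b ⟨i, hi⟩ = b'}

/-- The number `q` of distinct column sets `C_1, …, C_{r-1}` of `φ`. -/
noncomputable def numColSets {n : ℕ} (φ : Fin n → Fin r → Fin n) : ℕ :=
  {C : Set (Fin n) | ∃ i, ∃ hi : i < r, 1 ≤ i ∧ C = colSet φ i hi}.ncard

/-- The 2-block sliding block code induced by a block map `c`. -/
def PsiMap {A B : Type*} (c : A × A → B) (x : ℤ → A) : ℤ → B :=
  fun i => c (x (i - 1), x i)

end Subst

/-! ### IP sets and IP cluster points -/

/-- A subset of `ℤ` is an IP set if it is the set of finite sums of a sequence of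
distinct integers. -/
def IsIPSet (Q : Set ℤ) : Prop :=
  ∃ g : ℕ → ℤ, Function.Injective g ∧
    Q = {s | ∃ F : Finset ℕ, F.Nonempty ∧ s = ∑ i ∈ F, g i}

/-- `f` is an IP cluster point of the system `(X,T)` along the IP set `P`. -/
def IsIPCP {X : Type*} [TopologicalSpace X] (T : X ≃ₜ X) (f : X → X) (P : Set ℤ) : Prop :=
  ∀ U ∈ nhds f, ∃ Q : Set ℤ, IsIPSet Q ∧ Q ⊆ {k ∈ P | ⇑(T.toEquiv ^ k) ∈ U}

/-! Since `ω` is additive over non-overlapping blocks of base-`r` digits, everything reduces to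
digit counts. In base `r`, `p` has the digits `j j` and `p - 1` the digits `j (j-1)`, so by the
minimality of `j` we get `ω p = 1 + 1 = 0` and `ω (p - 1) = 1 + 0 = 1`. The terms `p r^{2m}` of
`ρ` occupy disjoint pairs of digits, hence `ω ρ = 0`; and `ρ - 1` only replaces the lowest term
`p r^{2m₀}` by `p r^{2m₀} - 1`, whose digits are those of `p - 1` followed by `2m₀` digits `r - 1`,
and these contribute an even multiple of `θ(0)_{r-1}`. -/

open Finset

theorem mul_pow_mul_lt_pow_mul_succ {r k c : ℕ} (hc : c < r ^ k) (m : ℕ) :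
    c * r ^ (k * m) < r ^ (k * (m + 1)) := by
  rw [mul_add, mul_one, pow_add, mul_comm (r ^ (k * m))]
  exact Nat.mul_lt_mul_of_pos_right hc (pos_of_ne_zero fun h => by simp_all)

theorem pow_dvd_sum_mul_pow (r k c : ℕ) {b : ℕ} {s : Finset ℕ} (hs : ∀ m ∈ s, b < m) :
    r ^ (k * (b + 1)) ∣ ∑ m ∈ s, c * r ^ (k * m) :=
  dvd_sum fun m hm => (pow_dvd_pow r (Nat.mul_le_mul_left k (hs m hm))).mul_left c

/-- `ω n` is the sum of `a d` over the base-`r` digits `d` of `n`. -/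
structure IsDigitSum {M : Type*} [AddCommMonoid M] {r : ℕ} (a : Fin r → M) (ω : ℕ → M) :
    Prop where
  map_zero : ω 0 = 0
  map_digit : ∀ (n : ℕ) (m : Fin r), ω (r * n + m) = ω n + a m

namespace IsDigitSum

variable {M : Type*} [AddCommMonoid M] {r : ℕ} {a : Fin r → M} {ω : ℕ → M}

theorem add_pow_mul (h : IsDigitSum a ω) {k n : ℕ} (t : ℕ) (hn : n < r ^ k) :
    ω (n + r ^ k * t) = ω n + ω t := by
  induction k generalizing n with
  | zero =>
    obtain rfl : n = 0 := by simpa using hn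
    simp [h.map_zero]
  | succ k ih =>
    have hr : 0 < r := Nat.pos_of_ne_zero fun hr => by simp [hr] at hn
    set d : Fin r := ⟨n % r, Nat.mod_lt n hr⟩
    have hq : n / r < r ^ k := Nat.div_lt_of_lt_mul (by rwa [← pow_succ'])
    have hn' : r * (n / r) + d = n := Nat.div_add_mod n r
    calc ω (n + r ^ (k + 1) * t) = ω (r * (n / r + r ^ k * t) + d) := by
          congr 1; rw [pow_succ']; linarith
      _ = ω n + ω t := by
          rw [h.map_digit, ih hq, add_right_comm]
          conv_rhs => rw [← hn', h.map_digit]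

variable [NeZero r]

theorem pow_mul (h : IsDigitSum a ω) (k t : ℕ) : ω (r ^ k * t) = ω t := by
  simpa [h.map_zero] using h.add_pow_mul t (pow_pos (NeZero.pos r) k)

theorem add_of_dvd (h : IsDigitSum a ω) {k n N : ℕ} (hn : n < r ^ k) (hN : r ^ k ∣ N) :
    ω (n + N) = ω n + ω N := by
  obtain ⟨t, rfl⟩ := hN
  rw [h.add_pow_mul t hn, h.pow_mul]

theorem sum_mul_pow (h : IsDigitSum a ω) {k c : ℕ} (hc : c < r ^ k) (F : Finset ℕ) :
    ω (∑ m ∈ F, c * r ^ (k * m)) = #F • ω c := by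
  induction F using Finset.induction_on_min with
  | empty => simp [h.map_zero]
  | insert b s hb ih =>
    have hbs : b ∉ s := fun hbs => lt_irrefl b (hb b hbs)
    rw [sum_insert hbs, card_insert_of_notMem hbs,
      h.add_of_dvd (mul_pow_mul_lt_pow_mul_succ hc b) (pow_dvd_sum_mul_pow r k c hb), ih,
      mul_comm c, h.pow_mul, succ_nsmul']

theorem mul_pow_sub_one (h : IsDigitSum a ω) {c : ℕ} (hc : 0 < c) (k : ℕ) :
    ω (c * r ^ k - 1) = ω (c - 1) + k • a ⟨r - 1, Nat.sub_one_lt (NeZero.ne r)⟩ := by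
  induction k with
  | zero => simp
  | succ k ih =>
    have hr := NeZero.pos r
    have hpos : 0 < c * r ^ k := by positivity
    have : c * r ^ (k + 1) - 1 = r * (c * r ^ k - 1) + (r - 1) := by
      have hle : r ≤ r * (c * r ^ k) := Nat.le_mul_of_pos_right r hpos
      rw [pow_succ', mul_left_comm, Nat.mul_sub_one]
      omega
    rw [this, h.map_digit (c * r ^ k - 1) ⟨r - 1, _⟩, ih, succ_nsmul, add_assoc]

theorem sum_mul_pow_sub_one (h : IsDigitSum a ω) {k c : ℕ} (hc0 : 0 < c) (hc : c < r ^ k)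
    {F : Finset ℕ} (hF : F.Nonempty) :
    ω (∑ m ∈ F, c * r ^ (k * m) - 1) = ω (c * r ^ (k * F.min' hF) - 1) + (#F - 1) • ω c := by
  set m₀ := F.min' hF
  have hm₀ : m₀ ∈ F := F.min'_mem hF
  have hpos : 0 < c * r ^ (k * m₀) := by have := NeZero.pos r; positivity
  have hlt := mul_pow_mul_lt_pow_mul_succ hc m₀
  have hrest : ∀ m ∈ F.erase m₀, m₀ < m := fun m hm =>
    lt_of_le_of_ne (F.min'_le m (mem_of_mem_erase hm)) (ne_of_mem_erase hm).symm
  rw [← add_sum_erase F _ hm₀, Nat.sub_add_comm hpos,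
    h.add_of_dvd (by omega) (pow_dvd_sum_mul_pow r k c hrest), h.sum_mul_pow hc,
    card_erase_of_mem hm₀]

end IsDigitSum

theorem stmt_15_general {r : ℕ} [NeZero r]
    (θ : Fin 2 → Fin r → Fin 2)
    (hθ00 : θ 0 ⟨0, NeZero.pos r⟩ = 0)
    (ω : ℕ → Fin 2)
    (hω0 : ω 0 = 0)
    (hωrec : ∀ (n : ℕ) (m : Fin r), ω (r * n + (m : ℕ)) = ω n + θ 0 m)
    (hIne : {m : ℕ | ∃ hm : m < r, θ 0 ⟨m, hm⟩ = 1}.Nonempty)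
    (j p : ℕ)
    (hj : j = sInf {m : ℕ | ∃ hm : m < r, θ 0 ⟨m, hm⟩ = 1})
    (hp : p = j * r + j) :
    ∀ F : Finset ℕ, F.Nonempty →
      ω (∑ m ∈ F, p * r ^ (2 * m)) = 0 ∧ ω ((∑ m ∈ F, p * r ^ (2 * m)) - 1) = 1 := by
  have hω : IsDigitSum (θ 0) ω := ⟨hω0, hωrec⟩
  obtain ⟨hjr, haj⟩ : ∃ hjr : j < r, θ 0 ⟨j, hjr⟩ = 1 := hj ▸ Nat.sInf_mem hIne
  have hj0 : j ≠ 0 := by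
    rintro rfl
    exact absurd (hθ00.symm.trans haj) (by decide)
  have haj' : θ 0 ⟨j - 1, by omega⟩ = 0 := by
    have hmin : j - 1 ∉ {m : ℕ | ∃ hm : m < r, θ 0 ⟨m, hm⟩ = 1} :=
      Nat.notMem_of_lt_sInf (hj ▸ by omega)
    exact (by decide : ∀ x : Fin 2, x ≠ 1 → x = 0) _ fun h1 => hmin ⟨_, h1⟩
  have hωj : ω j = 1 := by simpa [hω0, haj] using hωrec 0 ⟨j, hjr⟩
  have hωp : ω p = 0 := by
    rw [hp, mul_comm, hωrec j ⟨j, hjr⟩, hωj, haj]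
    rfl
  have hωp1 : ω (p - 1) = 1 := by
    rw [show p - 1 = r * j + (j - 1) by rw [hp, mul_comm]; omega, hωrec j ⟨j - 1, by omega⟩,
      hωj, haj', add_zero]
  have hp0 : 0 < p := by omega
  have hpr : p < r ^ 2 := by rw [hp, sq]; nlinarith
  intro F hF
  refine ⟨by rw [hω.sum_mul_pow hpr, hωp, smul_zero], ?_⟩
  rw [hω.sum_mul_pow_sub_one hp0 hpr hF, hω.mul_pow_sub_one hp0, hωp1, hωp, smul_zero, add_zero,
    mul_nsmul, (by decide : ∀ x : Fin 2, 2 • x = 0), smul_zero, add_zero]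

/-- For a continuous binary substitution with one-sided fixed point `ω`,
`I = {m : θ(0)_m = 1}`, `j = min I` and `p = jr + j`: for every nonempty finite `F ⊆ ℕ`,
with `ρ = Σ_{m ∈ F} p·r^{2m}`, one has `ω_ρ = 0` and `ω_{ρ-1} = 1`. -/
theorem stmt_15 {r : ℕ} [NeZero r] (hr : 2 ≤ r)
    (θ : Fin 2 → Fin r → Fin 2)
    (hθ00 : θ 0 ⟨0, NeZero.pos r⟩ = 0)
    (hcompl : ∀ m : Fin r, θ 1 m = θ 0 m + 1)
    (hdist : θ 0 ≠ θ 1)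
    (ω : ℕ → Fin 2)
    (hω0 : ω 0 = 0)
    (hωrec : ∀ (n : ℕ) (m : Fin r), ω (r * n + (m : ℕ)) = ω n + θ 0 m)
    (hnp : ∀ p : ℕ, 1 ≤ p → ∃ k : ℕ, ω (k + p) ≠ ω k)
    (hIne : {m : ℕ | ∃ hm : m < r, θ 0 ⟨m, hm⟩ = 1}.Nonempty)
    (j p : ℕ)
    (hj : j = sInf {m : ℕ | ∃ hm : m < r, θ 0 ⟨m, hm⟩ = 1})
    (hp : p = j * r + j) :
    ∀ F : Finset ℕ, F.Nonempty →
      ω (∑ m ∈ F, p * r ^ (2 * m)) = 0 ∧ ω ((∑ m ∈ F, p * r ^ (2 * m)) - 1) = 1 :=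
  stmt_15_general θ hθ00 ω hω0 hωrec hIne j p hj hp
end

section
/- Let θ be a continuous binary substitution of constant length r in canonical form, let w be the bi-infinite fixed point of θ with w_{−1} = w_0 = 0, let I = {m : θ(0)_m = 1}, j = min I, p = jr + j, and let P⁺ be the IP subset of ℤ generated by the sequence (p·r^{2m})_{m∈ℕ}. Then no function f ∈ (X_θ)^{X_θ} with f(w) = w is an IP cluster point of the shift system (X_θ,σ) along P⁺; in particular, the minimal idempotent g_1 of E(X_θ,σ), which satisfies g_1(w) = w, is not an IPCP along P⁺. -/
open Set Topology

/-!
Since `w₋₁ = 0` and `f w = w`, the maps `σⁿ` close to `f` satisfy `w(n - 1) = 0`, so an IP cluster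
point along `P⁺` yields some `n = p·N ∈ P⁺`, with `N = ∑_{m ∈ F} r^{2m}` and `F ≠ ∅`, such that
`w(n - 1) = 0`. But since `θ(1)` is the complement of `θ(0)`, the fixed-point equations read
`w(rx + m) = w x + θ(0)_m`; with `θ(0)_0 = θ(0)_{r-1} = θ(0)_{j-1} = 0` and `θ(0)_j = 1` this gives
`w(r²x) = w x`, `w(r²x - 1) = w(x - 1)`, `w(r²x + p) = w x` and `w(r²x + p - 1) = w x + 1`.
Peeling off the base-`r²` digits of `N` then yields `w(p·N - 1) = w 0 + 1 = 1`.
-/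

lemma IsIPSet.nonempty {Q : Set ℤ} (hQ : IsIPSet Q) : Q.Nonempty := by
  obtain ⟨g, -, rfl⟩ := hQ
  exact ⟨g 0, {0}, Finset.singleton_nonempty 0, by simp⟩

lemma IsIPCP.exists_mem_zpow_mem {X : Type*} [TopologicalSpace X] {T : X ≃ₜ X} {f : X → X}
    {P : Set ℤ} (hf : IsIPCP T f P) {U : Set (X → X)} (hU : U ∈ 𝓝 f) :
    ∃ k ∈ P, ⇑(T.toEquiv ^ k) ∈ U := by
  obtain ⟨Q, hQ, hQP⟩ := hf U hU
  obtain ⟨k, hk⟩ := hQ.nonempty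
  exact ⟨k, hQP hk⟩

section Shift

variable {A : Type*} [TopologicalSpace A]

lemma shiftHomOn_zpow_apply (x : ℤ → A) (n : ℤ) (y : orbitClosure x) (k : ℤ) :
    (((shiftHomOn x).toEquiv ^ n) y).1 k = y.1 (k + n) := by
  induction n using Int.induction_on generalizing y k with
  | zero => simp
  | succ n ih =>
    rw [zpow_add_one, Equiv.Perm.mul_apply, ih]
    show y.1 (k + n + 1) = y.1 (k + (n + 1))
    rw [add_assoc]
  | pred n ih =>
    rw [zpow_sub_one, Equiv.Perm.mul_apply, ih]
    show y.1 (k + -(n : ℤ) - 1) = y.1 (k + (-(n : ℤ) - 1))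
    rw [add_sub_assoc]

lemma IsIPCP.exists_shiftHomOn_apply_eq [DiscreteTopology A] {x : ℤ → A}
    {f : orbitClosure x → orbitClosure x} {P : Set ℤ} (hf : IsIPCP (shiftHomOn x) f P)
    (y : orbitClosure x) (i : ℤ) : ∃ k ∈ P, y.1 (i + k) = (f y).1 i := by
  have hc : Continuous fun g : orbitClosure x → orbitClosure x => (g y).1 i :=
    (continuous_apply i).comp (continuous_subtype_val.comp (continuous_apply y))
  have hU : {g : orbitClosure x → orbitClosure x | (g y).1 i = (f y).1 i} ∈ 𝓝 f :=
    hc.continuousAt.preimage_mem_nhds (t := {(f y).1 i}) (mem_nhds_discrete.2 rfl)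
  obtain ⟨k, hkP, hk⟩ := hf.exists_mem_zpow_mem hU
  exact ⟨k, hkP, (shiftHomOn_zpow_apply x k y i).symm.trans hk⟩

end Shift

section DigitSums

variable {R : Type*} [CommSemiring R]

lemma sum_range_succ_ite_pow (b : R) (s : ℕ → Prop) [DecidablePred s] (n : ℕ) :
    ∑ m ∈ Finset.range (n + 1), (if s m then b ^ m else 0) =
      b * ∑ m ∈ Finset.range n, (if s (m + 1) then b ^ m else 0) + if s 0 then 1 else 0 := by
  rw [Finset.sum_range_succ', Finset.mul_sum]
  congr 1
  · refine Finset.sum_congr rfl fun m _ => ?_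
    split_ifs <;> ring
  · rw [pow_zero]

variable {α : Type*} {w : ℤ → α} {b p : ℤ}

lemma apply_mul_sum_range_ite_pow (hb : ∀ x, w (b * x) = w x) (hbp : ∀ x, w (b * x + p) = w x)
    (n : ℕ) (s : ℕ → Prop) [DecidablePred s] :
    w (p * ∑ m ∈ Finset.range n, (if s m then b ^ m else 0)) = w 0 := by
  induction n generalizing s with
  | zero => simp
  | succ n ih =>
    rw [sum_range_succ_ite_pow, ← ih fun m => s (m + 1)]
    split_ifs
    · rw [mul_add, mul_one, mul_left_comm, hbp]
    · rw [add_zero, mul_left_comm, hb]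

lemma apply_mul_sum_range_ite_pow_sub_one {e : α → α} (hb : ∀ x, w (b * x) = w x)
    (hb1 : ∀ x, w (b * x - 1) = w (x - 1)) (hbp : ∀ x, w (b * x + p) = w x)
    (hbp1 : ∀ x, w (b * x + p - 1) = e (w x)) (n : ℕ) (s : ℕ → Prop) [DecidablePred s]
    (hs : ∃ m < n, s m) :
    w (p * ∑ m ∈ Finset.range n, (if s m then b ^ m else 0) - 1) = e (w 0) := by
  induction n generalizing s with
  | zero => simp at hs
  | succ n ih =>
    rw [sum_range_succ_ite_pow]
    by_cases hs0 : s 0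
    · rw [if_pos hs0, mul_add, mul_one, mul_left_comm, hbp1,
        apply_mul_sum_range_ite_pow hb hbp]
    · obtain ⟨_ | m, hm, hsm⟩ := hs
      · exact absurd hsm hs0
      rw [if_neg hs0, add_zero, mul_left_comm, hb1]
      exact ih (fun m => s (m + 1)) ⟨m, by omega, hsm⟩

lemma apply_mul_sum_pow_sub_one {e : α → α} (hb : ∀ x, w (b * x) = w x)
    (hb1 : ∀ x, w (b * x - 1) = w (x - 1)) (hbp : ∀ x, w (b * x + p) = w x)
    (hbp1 : ∀ x, w (b * x + p - 1) = e (w x)) {F : Finset ℕ} (hF : F.Nonempty) :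
    w (p * ∑ m ∈ F, b ^ m - 1) = e (w 0) := by
  obtain ⟨n, hn⟩ := F.exists_nat_subset_range
  obtain ⟨m, hm⟩ := hF
  have hsum : ∑ m ∈ F, b ^ m = ∑ m ∈ Finset.range n, (if m ∈ F then b ^ m else 0) := by
    rw [Finset.sum_ite_mem, Finset.inter_eq_right.2 hn]
  rw [hsum]
  exact apply_mul_sum_range_ite_pow_sub_one hb hb1 hbp hbp1 n (· ∈ F)
    ⟨m, Finset.mem_range.1 (hn hm), hm⟩

end DigitSums

section CanonicalForm

variable {na r : ℕ} [NeZero r] {θ : Fin na → Fin r → Fin na} {w : ℤ → Fin na}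

lemma IsSubFix.apply_mul (hw : IsSubFix θ w) (hcan : CanonicalFormSub θ) (x : ℤ) :
    w (r * x) = w x := by
  simpa using (hw x ⟨0, NeZero.pos r⟩).trans (hcan (w x)).1

lemma IsSubFix.apply_mul_sub_one (hw : IsSubFix θ w) (hcan : CanonicalFormSub θ) (x : ℤ) :
    w (r * x - 1) = w (x - 1) := by
  have h := (hw (x - 1) ⟨r - 1, Nat.sub_lt (NeZero.pos r) one_pos⟩).trans (hcan _).2
  rw [← h, Nat.cast_sub NeZero.one_le]
  congr 1
  push_cast
  ring

end CanonicalForm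

section BinarySubstitution

variable {r : ℕ} {θ : Fin 2 → Fin r → Fin 2} {w : ℤ → Fin 2}

lemma IsSubFix.apply_mul_add (hw : IsSubFix θ w) (hcompl : ∀ m : Fin r, θ 1 m = θ 0 m + 1)
    (x : ℤ) (m : ℕ) (hm : m < r) : w (r * x + m) = w x + θ 0 ⟨m, hm⟩ := by
  rw [hw x ⟨m, hm⟩]
  generalize w x = a
  fin_cases a <;> simp [hcompl, add_comm]

lemma IsSubFix.apply_mul_sum_sq_pow_sub_one [NeZero r] (hw : IsSubFix θ w)
    (hcan : CanonicalFormSub θ) (hcompl : ∀ m : Fin r, θ 1 m = θ 0 m + 1)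
    (hIne : {m : ℕ | ∃ hm : m < r, θ 0 ⟨m, hm⟩ = 1}.Nonempty) {j p : ℕ}
    (hj : j = sInf {m : ℕ | ∃ hm : m < r, θ 0 ⟨m, hm⟩ = 1}) (hp : p = j * r + j)
    {F : Finset ℕ} (hF : F.Nonempty) :
    w (p * ∑ m ∈ F, ((r : ℤ) ^ 2) ^ m - 1) = w 0 + 1 := by
  obtain ⟨hjr, hθj⟩ : ∃ hjr : j < r, θ 0 ⟨j, hjr⟩ = 1 := hj ▸ Nat.sInf_mem hIne
  have hj0 : j ≠ 0 := by
    rintro rfl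
    exact absurd ((hcan 0).1.symm.trans hθj) (by decide)
  have hθj' : θ 0 ⟨j - 1, by omega⟩ = 0 := by
    have hlt : j - 1 ∉ {m : ℕ | ∃ hm : m < r, θ 0 ⟨m, hm⟩ = 1} :=
      Nat.notMem_of_lt_sInf (by omega)
    generalize hc : θ 0 ⟨j - 1, _⟩ = c at hlt ⊢
    fin_cases c
    · rfl
    · exact absurd ⟨by omega, hc⟩ hlt
  have hjw : ∀ x, w (r * x + j) = w x + 1 := fun x => by
    rw [hw.apply_mul_add hcompl x j hjr, hθj]
  have hjw' : ∀ x, w (r * x + (j - 1 : ℕ)) = w x := fun x => by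
    rw [hw.apply_mul_add hcompl x (j - 1) (by omega), hθj', add_zero]
  apply apply_mul_sum_pow_sub_one (e := (· + 1)) _ _ _ _ hF
  · intro x; rw [sq, mul_assoc, hw.apply_mul hcan, hw.apply_mul hcan]
  · intro x; rw [sq, mul_assoc, hw.apply_mul_sub_one hcan, hw.apply_mul_sub_one hcan]
  · intro x
    have hx : (r : ℤ) ^ 2 * x + p = r * (r * x + j) + j := by rw [hp]; push_cast; ring
    rw [hx, hjw, hjw, add_assoc, (by decide : (1 : Fin 2) + 1 = 0), add_zero]
  · intro x
    have hx : (r : ℤ) ^ 2 * x + p - 1 = r * (r * x + j) + (j - 1 : ℕ) := by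
      rw [hp, Nat.cast_sub (by omega)]; push_cast; ring
    rw [hx, hjw', hjw]

end BinarySubstitution

theorem stmt_16_general {r : ℕ} [NeZero r]
    (θ : Fin 2 → Fin r → Fin 2)
    (hcan : CanonicalFormSub θ)
    (hcompl : ∀ mm : Fin r, θ 1 mm = θ 0 mm + 1)
    (w : ℤ → Fin 2) (hw : IsSubFix θ w) (hw1 : w (-1) = 0) (hw0 : w 0 = 0)
    (hIne : {m : ℕ | ∃ hm : m < r, θ 0 ⟨m, hm⟩ = 1}.Nonempty)
    (j p : ℕ)
    (hj : j = sInf {m : ℕ | ∃ hm : m < r, θ 0 ⟨m, hm⟩ = 1})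
    (hp : p = j * r + j) :
    ∀ f : ↥(orbitClosure w) → ↥(orbitClosure w),
      f ⟨w, self_mem_orbitClosure w⟩ = ⟨w, self_mem_orbitClosure w⟩ →
      ¬ IsIPCP (shiftHomOn w) f
        {s : ℤ | ∃ F : Finset ℕ, F.Nonempty ∧
          s = ∑ mm ∈ F, (p : ℤ) * (r : ℤ) ^ (2 * mm)} := by
  intro f hfw hIPCP
  obtain ⟨_, ⟨F, hF, rfl⟩, hk⟩ :=
    hIPCP.exists_shiftHomOn_apply_eq ⟨w, self_mem_orbitClosure w⟩ (-1)
  rw [hfw, neg_add_eq_sub] at hk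
  simp only [pow_mul, ← Finset.mul_sum] at hk
  rw [hw.apply_mul_sum_sq_pow_sub_one hcan hcompl hIne hj hp hF, hw0, hw1] at hk
  exact absurd hk (by decide)

/-- For a continuous binary substitution `θ` in canonical form with
bi-infinite fixed point `w` (`w_{-1} = w_0 = 0`), `I = {m : θ(0)_m = 1}`, `j = min I`,
`p = jr + j`, and `P⁺` the IP subset of `ℤ` generated by `(p·r^{2m})_{m ∈ ℕ}`: no function
`f : X_θ → X_θ` with `f(w) = w` is an IP cluster point of `(X_θ, σ)` along `P⁺`. -/
theorem stmt_16 {r : ℕ} [NeZero r] (hr : 2 ≤ r)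
    (θ : Fin 2 → Fin r → Fin 2)
    (hadm : AdmissibleSub θ) (hcan : CanonicalFormSub θ)
    (hθ00 : θ 0 ⟨0, NeZero.pos r⟩ = 0)
    (hcompl : ∀ mm : Fin r, θ 1 mm = θ 0 mm + 1)
    (w : ℤ → Fin 2) (hw : IsSubFix θ w) (hw1 : w (-1) = 0) (hw0 : w 0 = 0)
    (hIne : {m : ℕ | ∃ hm : m < r, θ 0 ⟨m, hm⟩ = 1}.Nonempty)
    (j p : ℕ)
    (hj : j = sInf {m : ℕ | ∃ hm : m < r, θ 0 ⟨m, hm⟩ = 1})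
    (hp : p = j * r + j) :
    ∀ f : ↥(orbitClosure w) → ↥(orbitClosure w),
      f ⟨w, self_mem_orbitClosure w⟩ = ⟨w, self_mem_orbitClosure w⟩ →
      ¬ IsIPCP (shiftHomOn w) f
        {s : ℤ | ∃ F : Finset ℕ, F.Nonempty ∧
          s = ∑ mm ∈ F, (p : ℤ) * (r : ℤ) ^ (2 * mm)} :=
  stmt_16_general θ hcan hcompl w hw hw1 hw0 hIne j p hj hp
end

section
/- Let θ be an admissible, primitive, coincidence-free substitution of constant length r in canonical form over a finite alphabet A containing 0, satisfying condition (A), and let φ be the quotient substitution on B. Then for every i ∈ {1,…,r−1}, the column set C_i = {φ(b)_i : b ∈ B} has exactly m(θ) elements. -/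
open Set Topology

/-- Every column set `C_i = {φ(b)_i : b ∈ B}` (`1 ≤ i ≤ r-1`) of the
quotient substitution `φ` has exactly `m(θ)` elements. -/
theorem stmt_19 {na r : ℕ} [NeZero na] [NeZero r] (hr : 2 ≤ r)
    (θ : Fin na → Fin r → Fin na)
    (hadm : AdmissibleSub θ) (hprim : PrimitiveSub θ) (hcf : CoincidenceFreeSub θ)
    (hcan : CanonicalFormSub θ)
    (xh : ℤ → Fin na) (d m : ℕ) (hht : HeightData θ xh d m)
    (hA : subCondA θ m (orbitClosure xh))
    (n : ℕ) [NeZero n] (c : Fin na × Fin na → Fin n) (φ : Fin n → Fin r → Fin n)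
    (hq : QuotientSubData θ m (orbitClosure xh) c φ) :
    ∀ (i : ℕ) (_ : 1 ≤ i) (hi : i < r), (colSet φ i hi).ncard = m := by
  obtain ⟨hfix, hx0, -, -, hm0, -, -, -⟩ := hht
  obtain ⟨hsurj, hciff, -, -, hphi⟩ := hq
  intro i hi1 hir
  obtain ⟨i', rfl⟩ : ∃ i', i = i' + 1 := ⟨i - 1, by omega⟩
  have hrpos := NeZero.pos r
  have hj' : i' < r := by omega
  -- the iterate lemma
  have hiter : ∀ (k : ℕ) (nn : ℤ) (j : ℕ), j < r ^ k →
      xh ((r:ℤ)^k * nn + (j:ℤ)) = wordIter θ k (xh nn) j := by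
    intro k
    induction k with
    | zero =>
      intro nn j hj
      simp only [pow_zero] at hj
      obtain rfl : j = 0 := by omega
      norm_num [wordIter]
    | succ k ih =>
      intro nn j hj
      have hq' : j / r ^ k < r := Nat.div_lt_of_lt_mul (by rw [← pow_succ]; exact hj)
      have hs : j % r ^ k < r ^ k := Nat.mod_lt _ (pow_pos hrpos k)
      have hd : (r:ℤ)^k * ((j / r^k : ℕ) : ℤ) + ((j % r^k : ℕ) : ℤ) = (j:ℤ) := by
        exact_mod_cast Nat.div_add_mod j (r^k)
      have hkey : (r:ℤ)^(k+1) * nn + (j:ℤ)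
          = (r:ℤ)^k * ((r:ℤ) * nn + ((j / r^k : ℕ):ℤ)) + ((j % r^k : ℕ):ℤ) := by
        rw [← hd]; ring
      rw [hkey, ih _ _ hs]
      have hfx : xh ((r:ℤ) * nn + ((j / r^k : ℕ):ℤ)) = θ (xh nn) ⟨j / r^k, hq'⟩ :=
        hfix nn ⟨j / r^k, hq'⟩
      rw [hfx]
      show wordIter θ k (θ (xh nn) ⟨j / r^k, hq'⟩) (j % r^k)
        = wordIter θ k (θ (xh nn) ⟨(j / r^k) % r, Nat.mod_lt _ hrpos⟩) (j % r^k)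
      congr 2
      exact Fin.ext (Nat.mod_eq_of_lt hq').symm
  -- every letter occurs in xh
  have hletter : ∀ b : Fin na, ∃ j : ℤ, xh j = b := by
    intro b
    obtain ⟨k, hk⟩ := hprim
    obtain ⟨j, hj, hwj⟩ := hk (xh 0) b
    refine ⟨(j:ℤ), ?_⟩
    have h := hiter k 0 j hj
    simp only [mul_zero, zero_add] at h
    rw [h, hwj]
  have hfix' : ∀ (jj : ℤ) (t : ℕ) (ht : t < r), xh ((r:ℤ) * jj + (t:ℤ)) = θ (xh jj) ⟨t, ht⟩ :=
    fun jj t ht => hfix jj ⟨t, ht⟩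
  -- legal pairs
  have hlegal2 : ∀ a : Fin na,
      ((θ a ⟨i', hj'⟩, θ a ⟨i'+1, hir⟩) : Fin na × Fin na) ∈ legalPairs (orbitClosure xh) := by
    intro a
    obtain ⟨j, hj⟩ := hletter a
    refine ⟨xh, self_mem_orbitClosure xh, (r:ℤ) * j + (i':ℤ), ?_, ?_⟩
    · show xh _ = θ a ⟨i', hj'⟩
      rw [hfix' j i' hj', hj]
    · show xh _ = θ a ⟨i'+1, hir⟩
      rw [show (r:ℤ)*j + (i':ℤ) + 1 = (r:ℤ)*j + ((i'+1 : ℕ):ℤ) by push_cast; ring,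
        hfix' j (i'+1) hir, hj]
  have hlegal1 : ∀ a : Fin na, ∃ ab ∈ legalPairs (orbitClosure xh), ab.2 = a := by
    intro a
    obtain ⟨j, hj⟩ := hletter a
    refine ⟨(xh (j-1), xh j), ⟨xh, self_mem_orbitClosure xh, j - 1, rfl, ?_⟩, hj⟩
    show xh (j - 1 + 1) = xh j
    congr 1; ring
  -- residue class facts
  have hzlt : ∀ a, subZ θ m a < m := by
    intro a; unfold subZ; exact Nat.mod_lt _ hm0
  set pf : Fin na → ℕ := fun a => (m - subZ θ m a) % m with hpfdef
  have hpflt : ∀ a, pf a < m := fun a => Nat.mod_lt _ hm0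
  have hmemS : ∀ a, a ∈ subS θ m (pf a) := by
    intro a
    have h1 := hzlt a
    show Int.ModEq (m:ℤ) (subZ θ m a : ℤ) (-(pf a : ℤ))
    rcases Nat.eq_zero_or_pos (subZ θ m a) with h | h
    · have h2 : pf a = 0 := by simp [hpfdef, h, Nat.mod_self]
      rw [h2, h]; simp
    · have h2 : pf a = m - subZ θ m a := by
        simp only [hpfdef]; exact Nat.mod_eq_of_lt (by omega)
      rw [Int.modEq_iff_dvd]
      refine ⟨-1, ?_⟩
      rw [h2]
      push_cast [Nat.cast_sub h1.le]
      ring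
  have huniq : ∀ (a : Fin na) (p p' : ℕ), p < m → p' < m →
      a ∈ subS θ m p → a ∈ subS θ m p' → p = p' := by
    intro a p p' hp hp' h1 h2
    have h3 : Int.ModEq (m:ℤ) (-(p:ℤ)) (-(p':ℤ)) := h1.symm.trans h2
    have h4 : (m:ℤ) ∣ (p':ℤ) - (p:ℤ) := by
      obtain ⟨t, ht⟩ := h3.dvd
      exact ⟨-t, by rw [mul_neg, ← ht]; ring⟩
    have h5 : (p':ℤ) - (p:ℤ) = 0 := by
      refine Int.eq_zero_of_abs_lt_dvd h4 ?_
      rw [abs_lt]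
      constructor <;> omega
    omega
  -- wordIter at level 1
  have hw1 : ∀ (q : Fin na) (j : ℕ) (hjj : j < r), wordIter θ 1 q j = θ q ⟨j, hjj⟩ := by
    intro q j hjj
    show θ q ⟨(j / r ^ 0) % r, Nat.mod_lt _ hrpos⟩ = θ q ⟨j, hjj⟩
    congr 1
    apply Fin.ext
    show (j / r ^ 0) % r = j
    simp [Nat.mod_eq_of_lt hjj]
  have hmemP : ∀ (a : Fin na) (p : ℕ), a ∈ subS θ m p →
      ((θ a ⟨i', hj'⟩, θ a ⟨i'+1, hir⟩) : Fin na × Fin na) ∈ subP θ m p i' 1 := by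
    intro a p ha
    refine ⟨a, ha, ?_⟩
    rw [hw1 a i' hj', hw1 a (i'+1) hir]
  have hclassP : ∀ p, p < m → subP θ m p i' 1 ∈ subClasses θ m := by
    intro p hp
    exact ⟨p, hp, 1, le_rfl, i', by rw [pow_one]; omega, rfl⟩
  have hSne : ∀ p : ℕ, p < m → ∃ a, a ∈ subS θ m p := by
    intro p hp
    obtain ⟨ab, q, hqS, -⟩ := hA.1 _ (hclassP p hp)
    exact ⟨q, hqS⟩
  -- same residue gives same class label
  have hFeq : ∀ (a a' : Fin na) (p : ℕ), p < m → a ∈ subS θ m p → a' ∈ subS θ m p →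
      c (θ a ⟨i', hj'⟩, θ a ⟨i'+1, hir⟩) = c (θ a' ⟨i', hj'⟩, θ a' ⟨i'+1, hir⟩) := by
    intro a a' p hp ha ha'
    exact (hciff _ (hlegal2 a) _ (hlegal2 a')).mpr
      ⟨subP θ m p i' 1, hclassP p hp, hmemP a p ha, hmemP a' p ha'⟩
  -- same class label forces same residue
  have hFinj : ∀ (a a' : Fin na) (p p' : ℕ), p < m → p' < m →
      a ∈ subS θ m p → a' ∈ subS θ m p' →
      c (θ a ⟨i', hj'⟩, θ a ⟨i'+1, hir⟩) = c (θ a' ⟨i', hj'⟩, θ a' ⟨i'+1, hir⟩) → p = p' := by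
    intro a a' p p' hp hp' ha ha' hcc
    obtain ⟨C, hC, hmem1, hmem2⟩ := (hciff _ (hlegal2 a) _ (hlegal2 a')).mp hcc
    have e1 : C = subP θ m p i' 1 := by
      rcases hA.2.2 C hC _ (hclassP p hp) with h | h
      · exact h
      · exact absurd (hmemP a p ha) (Set.disjoint_left.mp h hmem1)
    rw [e1] at hmem2
    obtain ⟨q, hqS, hqe⟩ := hmem2
    rw [hw1 q i' hj', hw1 q (i'+1) hir] at hqe
    have haq : a' = q := by
      by_contra hne
      exact hcf a' q hne ⟨i', hj'⟩ (congrArg Prod.fst hqe)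
    refine huniq a' p p' hp hp' ?_ ha'
    rwa [haq]
  -- representatives
  choose rep hrep using fun p : Fin m => hSne p.1 p.2
  set g : Fin m → Fin n :=
    fun p => c (θ (rep p) ⟨i', hj'⟩, θ (rep p) ⟨i'+1, hir⟩) with hg
  have hcol : colSet φ (i'+1) hir = Set.range g := by
    ext b'
    constructor
    · rintro ⟨b, hb⟩
      obtain ⟨ab, habL, hcab⟩ := hsurj b
      have h1 : φ b ⟨i'+1, hir⟩ = c (θ ab.2 ⟨i', hj'⟩, θ ab.2 ⟨i'+1, hir⟩) :=
        hphi b ab habL hcab (i'+1) (by omega) hir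
      refine ⟨⟨pf ab.2, hpflt ab.2⟩, ?_⟩
      show c (θ (rep ⟨pf ab.2, hpflt ab.2⟩) ⟨i', hj'⟩,
        θ (rep ⟨pf ab.2, hpflt ab.2⟩) ⟨i'+1, hir⟩) = b'
      rw [← hb, h1]
      exact hFeq (rep ⟨pf ab.2, hpflt ab.2⟩) ab.2 (pf ab.2) (hpflt ab.2)
        (hrep ⟨pf ab.2, hpflt ab.2⟩) (hmemS ab.2)
    · rintro ⟨p, rfl⟩
      obtain ⟨ab, habL, hab2⟩ := hlegal1 (rep p)
      refine ⟨c ab, ?_⟩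
      have h1 : φ (c ab) ⟨i'+1, hir⟩ = c (θ ab.2 ⟨i', hj'⟩, θ ab.2 ⟨i'+1, hir⟩) :=
        hphi (c ab) ab habL rfl (i'+1) (by omega) hir
      rw [h1, hab2]
  have ginj : Function.Injective g := by
    intro p p' hpp
    apply Fin.ext
    exact hFinj (rep p) (rep p') p.1 p'.1 p.2 p'.2 (hrep p) (hrep p') hpp
  rw [hcol, ← Set.image_univ, Set.ncard_image_of_injective _ ginj, Set.ncard_univ,
    Nat.card_eq_fintype_card, Fintype.card_fin]
end
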